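/- The quantity k = [α₁(w₂² - w₃²) + α₂(w₃² - w₁²) + α₃(w₁² - w₂²)] / [8(α₁-α₂)(α₂-α₃)(α₃-α₁)] is a first integral of the diagonal anti-self-dual system: its derivative along any solution with (α₁-α₂)(α₂-α₃)(α₃-α₁) ≠ 0 is zero. -/

import Mathlib

/-! Along the system, each difference `αᵢ - αⱼ` grows like `2 αₖ (αᵢ - αⱼ)`, so the denominator
satisfies `D' = 2 (α₁ + α₂ + α₃) D`; a direct computation shows that the numerator obeys the same
linear equation `N' = 2 (α₁ + α₂ + α₃) N`. Two functions with the same logarithmic derivative have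
a constant quotient. -/

theorem HasDerivAt.div_eq_zero_of_same_logDeriv {𝕜 : Type*} [NontriviallyNormedField 𝕜]
    {f g : 𝕜 → 𝕜} {c x : 𝕜} (hf : HasDerivAt f (c * f x) x) (hg : HasDerivAt g (c * g x) x)
    (hgx : g x ≠ 0) : HasDerivAt (fun s => f s / g s) 0 x :=
  (hf.div hg hgx).congr_deriv (by ring)

section DiagonalASD

variable {w₁ w₂ w₃ α₁ α₂ α₃ : ℝ → ℝ} {t : ℝ}

theorem hasDerivAt_asd_denominator
    (hα₁ : HasDerivAt α₁ (-(α₂ t * α₃ t) + α₁ t * (α₂ t + α₃ t)) t)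
    (hα₂ : HasDerivAt α₂ (-(α₃ t * α₁ t) + α₂ t * (α₃ t + α₁ t)) t)
    (hα₃ : HasDerivAt α₃ (-(α₁ t * α₂ t) + α₃ t * (α₁ t + α₂ t)) t) :
    HasDerivAt (fun s => 8 * (α₁ s - α₂ s) * (α₂ s - α₃ s) * (α₃ s - α₁ s))
      (2 * (α₁ t + α₂ t + α₃ t) * (8 * (α₁ t - α₂ t) * (α₂ t - α₃ t) * (α₃ t - α₁ t))) t :=
  ((((hα₁.sub hα₂).const_mul 8).mul (hα₂.sub hα₃)).mul (hα₃.sub hα₁)).congr_deriv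
    (by simp only [Pi.sub_apply, Pi.mul_apply]; ring)

theorem hasDerivAt_asd_numerator
    (hw₁ : HasDerivAt w₁ (-(w₂ t * w₃ t) + w₁ t * (α₂ t + α₃ t)) t)
    (hw₂ : HasDerivAt w₂ (-(w₃ t * w₁ t) + w₂ t * (α₃ t + α₁ t)) t)
    (hw₃ : HasDerivAt w₃ (-(w₁ t * w₂ t) + w₃ t * (α₁ t + α₂ t)) t)
    (hα₁ : HasDerivAt α₁ (-(α₂ t * α₃ t) + α₁ t * (α₂ t + α₃ t)) t)
    (hα₂ : HasDerivAt α₂ (-(α₃ t * α₁ t) + α₂ t * (α₃ t + α₁ t)) t)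
    (hα₃ : HasDerivAt α₃ (-(α₁ t * α₂ t) + α₃ t * (α₁ t + α₂ t)) t) :
    HasDerivAt
      (fun s => α₁ s * ((w₂ s)^2 - (w₃ s)^2) + α₂ s * ((w₃ s)^2 - (w₁ s)^2)
        + α₃ s * ((w₁ s)^2 - (w₂ s)^2))
      (2 * (α₁ t + α₂ t + α₃ t) * (α₁ t * ((w₂ t)^2 - (w₃ t)^2) + α₂ t * ((w₃ t)^2 - (w₁ t)^2)
        + α₃ t * ((w₁ t)^2 - (w₂ t)^2))) t :=
  ((hα₁.mul ((hw₂.pow 2).sub (hw₃.pow 2))).add (hα₂.mul ((hw₃.pow 2).sub (hw₁.pow 2)))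
    |>.add (hα₃.mul ((hw₁.pow 2).sub (hw₂.pow 2)))).congr_deriv
    (by simp only [Pi.sub_apply, Pi.pow_apply, Nat.cast_ofNat]; ring)

end DiagonalASD

/-- The quantity k is a first integral of the diagonal anti-self-dual system. -/
theorem first_integral_diagonal_asd
    (w₁ w₂ w₃ α₁ α₂ α₃ : ℝ → ℝ)
    (hw₁ : ∀ t, HasDerivAt w₁ (-(w₂ t * w₃ t) + w₁ t * (α₂ t + α₃ t)) t)
    (hw₂ : ∀ t, HasDerivAt w₂ (-(w₃ t * w₁ t) + w₂ t * (α₃ t + α₁ t)) t)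
    (hw₃ : ∀ t, HasDerivAt w₃ (-(w₁ t * w₂ t) + w₃ t * (α₁ t + α₂ t)) t)
    (hα₁ : ∀ t, HasDerivAt α₁ (-(α₂ t * α₃ t) + α₁ t * (α₂ t + α₃ t)) t)
    (hα₂ : ∀ t, HasDerivAt α₂ (-(α₃ t * α₁ t) + α₂ t * (α₃ t + α₁ t)) t)
    (hα₃ : ∀ t, HasDerivAt α₃ (-(α₁ t * α₂ t) + α₃ t * (α₁ t + α₂ t)) t)
    (hne : ∀ t, (α₁ t - α₂ t) * (α₂ t - α₃ t) * (α₃ t - α₁ t) ≠ 0) :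
    ∀ t, HasDerivAt
      (fun s =>
        (α₁ s * ((w₂ s)^2 - (w₃ s)^2) + α₂ s * ((w₃ s)^2 - (w₁ s)^2)
          + α₃ s * ((w₁ s)^2 - (w₂ s)^2)) /
        (8 * (α₁ s - α₂ s) * (α₂ s - α₃ s) * (α₃ s - α₁ s)))
      0 t := by
  intro t
  have hD : 8 * (α₁ t - α₂ t) * (α₂ t - α₃ t) * (α₃ t - α₁ t) ≠ 0 := by
    simpa only [mul_assoc] using mul_ne_zero (by norm_num) (by simpa only [mul_assoc] using hne t)
  exact (hasDerivAt_asd_numerator (hw₁ t) (hw₂ t) (hw₃ t) (hα₁ t) (hα₂ t) (hα₃ t))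
    |>.div_eq_zero_of_same_logDeriv (hasDerivAt_asd_denominator (hα₁ t) (hα₂ t) (hα₃ t)) hD
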